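/- Let $\nu$ be a doubling weight, $\alpha\in\mathbb{R}$, and $b\in L^1_{loc}$ satisfying: (a) $\lim_{r\to0}\sup_{\ell(Q)\le r}\mathcal{O}_\nu^\alpha(b;Q)=0$; (b) $\lim_{r\to\infty}\sup_{\ell(Q)\ge r}\mathcal{O}_\nu^\alpha(b;Q)=0$; (c) $\sup_Q\lim_{|x|\to\infty}\mathcal{O}_\nu^\alpha(b;Q+x)=0$. Then the a priori stronger uniform condition $\lim_{r\to\infty}\sup_{Q:\,\mathrm{dist}(Q,0)>r}\mathcal{O}_\nu^\alpha(b;Q)=0$ also holds. -/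

import Mathlib

open MeasureTheory

noncomputable def Cube (d : ℕ) (c : Fin d → ℝ) (l : ℝ) : Set (Fin d → ℝ) :=
  Set.univ.pi fun i => Set.Icc (c i) (c i + l)

noncomputable def avgC (d : ℕ) (b : (Fin d → ℝ) → ℂ) (Q : Set (Fin d → ℝ)) : ℂ :=
  (volume Q).toReal⁻¹ • ∫ x in Q, b x

/-- `𝒪_ν^α(b;Q) = ν(Q)^{-α/d} (1/ν(Q)) ∫_Q |b - ⟨b⟩_Q|`. -/
noncomputable def oscR (d : ℕ) (ν : (Fin d → ℝ) → ℝ) (b : (Fin d → ℝ) → ℂ)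
    (α : ℝ) (Q : Set (Fin d → ℝ)) : ℝ :=
  ((∫ x in Q, ν x) ^ (-(α / (d : ℝ)))) *
    ((∫ x in Q, ‖b x - avgC d b Q‖) / (∫ x in Q, ν x))

/-!
Cubes of side at most `r₀` or at least `r₁` are handled by (a) and (b). A cube of intermediate
side `l` lies, with the same corner, in a cube whose side `l'` is one of the finitely many lengths
`r₀ (3/2)^n ≤ r₀ (3/2)^N` and satisfies `l ≤ l' ≤ 3l/2`; the enlarged cube sits in the doubled
cube, so by doubling the oscillation over the small cube is controlled by the oscillation over
the enlarged one. Applying (c) to the finitely many reference cubes `[0, r₀ (3/2)^n]^d` gives a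
single radius beyond which all of their translates have small oscillation.
-/

theorem Real.rpow_le_abs_rpow_mul_of_le_of_le_mul {a a' D : ℝ} (e : ℝ) (ha : 0 < a)
    (haa' : a ≤ a') (ha'D : a' ≤ D * a) (hD : 1 ≤ D) : a ^ e ≤ D ^ |e| * a' ^ e := by
  have hD0 : 0 < D := one_pos.trans_le hD
  rcases le_or_gt 0 e with he | he
  · calc a ^ e ≤ a' ^ e := Real.rpow_le_rpow ha.le haa' he
      _ ≤ D ^ |e| * a' ^ e :=
        le_mul_of_one_le_left (Real.rpow_nonneg (ha.le.trans haa') e)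
          (Real.one_le_rpow hD (abs_nonneg e))
  · have ha'D' : a' / D ≤ a := (div_le_iff₀' hD0).2 ha'D
    calc a ^ e ≤ (a' / D) ^ e :=
          Real.rpow_le_rpow_of_nonpos (div_pos (ha.trans_le haa') hD0) ha'D' he.le
      _ = D ^ |e| * a' ^ e := by
        rw [Real.div_rpow (ha.le.trans haa') hD0.le, abs_of_neg he, Real.rpow_neg hD0.le]
        ring

section MeanOscillation

variable {X E : Type*} [MeasurableSpace X] {μ : Measure X}
  [NormedAddCommGroup E] [NormedSpace ℝ E] [CompleteSpace E]

theorem setIntegral_norm_sub_setAverage_le {s : Set X} (hs : μ s ≠ ⊤) {f : X → E}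
    (hf : IntegrableOn f s μ) (m : E) :
    ∫ x in s, ‖f x - ⨍ y in s, f y ∂μ‖ ∂μ ≤ 2 * ∫ x in s, ‖f x - m‖ ∂μ := by
  have hm : IntegrableOn (fun _ => m) s μ := integrableOn_const hs
  have hfm : IntegrableOn (fun x => f x - m) s μ := hf.sub hm
  have hmean : μ.real s * ‖(⨍ y in s, f y ∂μ) - m‖ ≤ ∫ x in s, ‖f x - m‖ ∂μ := by
    have : μ.real s • ((⨍ y in s, f y ∂μ) - m) = ∫ x in s, (f x - m) ∂μ := by
      rw [smul_sub, measure_smul_setAverage _ hs, integral_sub hf hm, setIntegral_const]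
    rw [← Real.norm_of_nonneg measureReal_nonneg, ← norm_smul, this]
    exact norm_integral_le_integral_norm _
  calc ∫ x in s, ‖f x - ⨍ y in s, f y ∂μ‖ ∂μ
      ≤ ∫ x in s, (‖f x - m‖ + ‖(⨍ y in s, f y ∂μ) - m‖) ∂μ := by
        refine integral_mono (hf.sub (integrableOn_const hs)).norm
          (hfm.norm.add (integrableOn_const hs)) fun x => ?_
        simpa only [sub_sub_sub_cancel_right] using
          norm_sub_le (f x - m) ((⨍ y in s, f y ∂μ) - m)
    _ = (∫ x in s, ‖f x - m‖ ∂μ) + μ.real s * ‖(⨍ y in s, f y ∂μ) - m‖ := by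
        rw [integral_add hfm.norm (integrableOn_const hs), setIntegral_const, smul_eq_mul]
    _ ≤ 2 * ∫ x in s, ‖f x - m‖ ∂μ := by linarith

theorem setIntegral_norm_sub_setAverage_le_of_subset {s t : Set X} (hst : s ⊆ t)
    (ht : μ t ≠ ⊤) {f : X → E} (hf : IntegrableOn f t μ) :
    ∫ x in s, ‖f x - ⨍ y in s, f y ∂μ‖ ∂μ ≤ 2 * ∫ x in t, ‖f x - ⨍ y in t, f y ∂μ‖ ∂μ := by
  calc ∫ x in s, ‖f x - ⨍ y in s, f y ∂μ‖ ∂μ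
      ≤ 2 * ∫ x in s, ‖f x - ⨍ y in t, f y ∂μ‖ ∂μ :=
        setIntegral_norm_sub_setAverage_le (measure_ne_top_of_subset hst ht) (hf.mono_set hst) _
    _ ≤ 2 * ∫ x in t, ‖f x - ⨍ y in t, f y ∂μ‖ ∂μ := by
        have hconst : IntegrableOn (fun _ => ⨍ y in t, f y ∂μ) t μ := integrableOn_const ht
        exact mul_le_mul_of_nonneg_left (setIntegral_mono_set (hf.sub hconst).norm
          (.of_forall fun _ => norm_nonneg _) hst.eventuallyLE) zero_le_two

end MeanOscillation

theorem avgC_eq_setAverage (d : ℕ) (b : (Fin d → ℝ) → ℂ) (Q : Set (Fin d → ℝ)) :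
    avgC d b Q = ⨍ x in Q, b x :=
  (setAverage_eq (μ := volume) _ _).symm

theorem oscR_le_of_subset (d : ℕ) (α : ℝ) {ν : (Fin d → ℝ) → ℝ} {b : (Fin d → ℝ) → ℂ}
    {Q Q' : Set (Fin d → ℝ)} (hQQ' : Q ⊆ Q') (hQ' : volume Q' ≠ ⊤) (hb : IntegrableOn b Q')
    {D : ℝ} (hD : 1 ≤ D) (hνQ : 0 < ∫ x in Q, ν x) (hνmono : ∫ x in Q, ν x ≤ ∫ x in Q', ν x)
    (hνdbl : ∫ x in Q', ν x ≤ D * ∫ x in Q, ν x) :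
    oscR d ν b α Q ≤ 2 * D * D ^ |α / d| * oscR d ν b α Q' := by
  have hνQ' : 0 < ∫ x in Q', ν x := hνQ.trans_le hνmono
  have hweight := Real.rpow_le_abs_rpow_mul_of_le_of_le_mul (-(α / d)) hνQ hνmono hνdbl hD
  have hosc : ∫ x in Q, ‖b x - avgC d b Q‖ ≤ 2 * ∫ x in Q', ‖b x - avgC d b Q'‖ := by
    simpa only [avgC_eq_setAverage] using setIntegral_norm_sub_setAverage_le_of_subset hQQ' hQ' hb
  have hinv : 1 / ∫ x in Q, ν x ≤ D / ∫ x in Q', ν x := by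
    rw [div_le_div_iff₀ hνQ hνQ']
    linarith
  rw [abs_neg] at hweight
  have hI : 0 ≤ ∫ x in Q, ‖b x - avgC d b Q‖ := integral_nonneg fun _ => norm_nonneg _
  calc oscR d ν b α Q
      = (∫ x in Q, ν x) ^ (-(α / d)) * (∫ x in Q, ‖b x - avgC d b Q‖) * (1 / ∫ x in Q, ν x) := by
        rw [oscR]; ring
    _ ≤ (D ^ |α / d| * (∫ x in Q', ν x) ^ (-(α / d))) *
          (2 * ∫ x in Q', ‖b x - avgC d b Q'‖) * (D / ∫ x in Q', ν x) := by
        gcongr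
    _ = 2 * D * D ^ |α / d| * oscR d ν b α Q' := by
        rw [oscR]; ring

theorem isCompact_cube (d : ℕ) (c : Fin d → ℝ) (l : ℝ) : IsCompact (Cube d c l) :=
  isCompact_univ_pi fun _ => isCompact_Icc

theorem volume_cube (d : ℕ) (c : Fin d → ℝ) (l : ℝ) :
    volume (Cube d c l) = ENNReal.ofReal l ^ d := by
  rw [Cube, volume_pi_pi]
  simp [Real.volume_Icc]

theorem cube_mono (d : ℕ) (c : Fin d → ℝ) {l l' : ℝ} (h : l ≤ l') :
    Cube d c l ⊆ Cube d c l' :=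
  Set.pi_mono fun i _ => Set.Icc_subset_Icc_right (by linarith)

theorem cube_subset_doubled_cube (d : ℕ) (c : Fin d → ℝ) {l l' : ℝ} (hl : 0 ≤ l)
    (h : l' ≤ 3 * l / 2) : Cube d c l' ⊆ Cube d (fun i => c i - l / 2) (2 * l) :=
  Set.pi_mono fun i _ => Set.Icc_subset_Icc (by linarith) (by linarith)

theorem infDist_zero_cube_le_norm (d : ℕ) (c : Fin d → ℝ) {l : ℝ} (hl : 0 ≤ l) :
    Metric.infDist 0 (Cube d c l) ≤ ‖c‖ := by
  have hc : c ∈ Cube d c l := fun i _ => Set.left_mem_Icc.2 (le_add_of_nonneg_right hl)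
  simpa using Metric.infDist_le_dist_of_mem (x := 0) hc

theorem setIntegral_cube_pos (d : ℕ) {ν : (Fin d → ℝ) → ℝ} (hνpos : ∀ x, 0 < ν x)
    (hνloc : LocallyIntegrable ν volume) (c : Fin d → ℝ) {l : ℝ} (hl : 0 < l) :
    0 < ∫ x in Cube d c l, ν x := by
  rw [setIntegral_pos_iff_support_of_nonneg_ae (.of_forall fun x => (hνpos x).le)
    (hνloc.integrableOn_isCompact (isCompact_cube d c l)),
    Set.inter_eq_self_of_subset_right (s := Function.support ν) fun x _ => (hνpos x).ne',
    volume_cube d c l]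
  exact ENNReal.pow_pos (ENNReal.ofReal_pos.2 hl) d

theorem oscR_cube_le_of_le (d : ℕ) (α : ℝ) {ν : (Fin d → ℝ) → ℝ} (hνpos : ∀ x, 0 < ν x)
    (hνloc : LocallyIntegrable ν volume) {D : ℝ} (hD : 1 ≤ D)
    (hdbl : ∀ (c : Fin d → ℝ) (l : ℝ), 0 < l →
      (∫ x in Cube d (fun i => c i - l / 2) (2 * l), ν x) ≤ D * ∫ x in Cube d c l, ν x)
    {b : (Fin d → ℝ) → ℂ} (hb : LocallyIntegrable b volume)
    (c : Fin d → ℝ) {l l' : ℝ} (hl : 0 < l) (hll' : l ≤ l') (hl' : l' ≤ 3 * l / 2) :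
    oscR d ν b α (Cube d c l) ≤ 2 * D * D ^ |α / d| * oscR d ν b α (Cube d c l') := by
  have hνint : ∀ c l, IntegrableOn ν (Cube d c l) :=
    fun c l => hνloc.integrableOn_isCompact (isCompact_cube d c l)
  have hνnonneg : ∀ s : Set (Fin d → ℝ), 0 ≤ᵐ[volume.restrict s] ν :=
    fun _ => .of_forall fun x => (hνpos x).le
  refine oscR_le_of_subset d α (cube_mono d c hll')
    (by rw [volume_cube d c l']; finiteness)
    (hb.integrableOn_isCompact (isCompact_cube d c l')) hD (setIntegral_cube_pos d hνpos hνloc c hl)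
    (setIntegral_mono_set (hνint c l') (hνnonneg _) (cube_mono d c hll').eventuallyLE) ?_
  calc ∫ x in Cube d c l', ν x
      ≤ ∫ x in Cube d (fun i => c i - l / 2) (2 * l), ν x :=
        setIntegral_mono_set (hνint _ _) (hνnonneg _)
          (cube_subset_doubled_cube d c hl.le hl').eventuallyLE
    _ ≤ D * ∫ x in Cube d c l, ν x := hdbl c l hl

theorem exists_geometric_side_mem {r₀ l : ℝ} (hr₀ : 0 < r₀) (hl : r₀ ≤ l) :
    ∃ n : ℕ, r₀ * (3 / 2) ^ n ≤ l ∧ l ≤ r₀ * (3 / 2) ^ (n + 1) ∧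
      r₀ * (3 / 2) ^ (n + 1) ≤ 3 * l / 2 := by
  obtain ⟨n, hle, hlt⟩ := exists_nat_pow_near ((one_le_div hr₀).2 hl) (by norm_num : (1 : ℝ) < 3 / 2)
  rw [le_div_iff₀' hr₀] at hle
  rw [div_lt_iff₀' hr₀] at hlt
  refine ⟨n, hle, hlt.le, ?_⟩
  rw [pow_succ]
  linarith

theorem stmt17_general (d : ℕ) (α : ℝ)
    (ν : (Fin d → ℝ) → ℝ) (hνpos : ∀ x, 0 < ν x) (hνloc : LocallyIntegrable ν volume)
    (hdbl : ∃ Cd > (0 : ℝ), ∀ (c : Fin d → ℝ) (l : ℝ), 0 < l →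
      (∫ x in Cube d (fun i => c i - l / 2) (2 * l), ν x) ≤ Cd * ∫ x in Cube d c l, ν x)
    (b : (Fin d → ℝ) → ℂ) (hb : LocallyIntegrable b volume)
    (hsmall : ∀ ε > (0 : ℝ), ∃ r > (0 : ℝ), ∀ (c : Fin d → ℝ) (l : ℝ), 0 < l → l ≤ r →
      oscR d ν b α (Cube d c l) ≤ ε)
    (hbig : ∀ ε > (0 : ℝ), ∃ r > (0 : ℝ), ∀ (c : Fin d → ℝ) (l : ℝ), 0 < l → r ≤ l →
      oscR d ν b α (Cube d c l) ≤ ε)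
    (htrans : ∀ (c : Fin d → ℝ) (l : ℝ), 0 < l → ∀ ε > (0 : ℝ), ∃ R > (0 : ℝ),
      ∀ x : Fin d → ℝ, R ≤ ‖x‖ → oscR d ν b α (Cube d (c + x) l) ≤ ε) :
    ∀ ε > (0 : ℝ), ∃ r > (0 : ℝ), ∀ (c : Fin d → ℝ) (l : ℝ), 0 < l →
      r < Metric.infDist (0 : Fin d → ℝ) (Cube d c l) →
      oscR d ν b α (Cube d c l) ≤ ε := by
  intro ε hε
  obtain ⟨Cd, -, hCd⟩ := hdbl
  set D := max 1 Cd
  have hdbl : ∀ (c : Fin d → ℝ) (l : ℝ), 0 < l →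
      (∫ x in Cube d (fun i => c i - l / 2) (2 * l), ν x) ≤ D * ∫ x in Cube d c l, ν x :=
    fun c l hl => (hCd c l hl).trans <| mul_le_mul_of_nonneg_right (le_max_right _ _)
      (setIntegral_cube_pos d hνpos hνloc c hl).le
  have hC : 0 < 2 * D * D ^ |α / d| := by positivity
  obtain ⟨r₀, hr₀, hsmall⟩ := hsmall ε hε
  obtain ⟨r₁, -, hbig⟩ := hbig ε hε
  obtain ⟨N, hN⟩ := pow_unbounded_of_one_lt (r₁ / r₀) (by norm_num : (1 : ℝ) < 3 / 2)
  choose R hRpos hR using fun n : ℕ =>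
    htrans 0 (r₀ * (3 / 2) ^ n) (by positivity) (ε / (2 * D * D ^ |α / d|)) (by positivity)
  have hR0 : R 0 ≤ (Finset.range (N + 1)).sup' Finset.nonempty_range_add_one R :=
    Finset.le_sup' R (Finset.mem_range.2 N.succ_pos)
  refine ⟨_, (hRpos 0).trans_le hR0, fun c l hl hdist => ?_⟩
  rcases le_or_gt l r₀ with hlr₀ | hlr₀
  · exact hsmall c l hl hlr₀
  rcases le_or_gt r₁ l with hlr₁ | hlr₁
  · exact hbig c l hl hlr₁
  obtain ⟨n, hn, hll', hl'⟩ := exists_geometric_side_mem hr₀ hlr₀.le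
  have hnN : n + 1 ≤ N := by
    rw [div_lt_iff₀' hr₀] at hN
    exact (pow_lt_pow_iff_right₀ (by norm_num : (1 : ℝ) < 3 / 2)).1
      (lt_of_mul_lt_mul_left (by linarith) hr₀.le)
  have hRc : R (n + 1) ≤ ‖c‖ :=
    calc R (n + 1) ≤ (Finset.range (N + 1)).sup' Finset.nonempty_range_add_one R :=
          Finset.le_sup' R (Finset.mem_range.2 (by omega))
      _ ≤ ‖c‖ := (hdist.trans_le (infDist_zero_cube_le_norm d c hl.le)).le
  calc oscR d ν b α (Cube d c l)
      ≤ 2 * D * D ^ |α / d| * oscR d ν b α (Cube d c (r₀ * (3 / 2) ^ (n + 1))) :=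
        oscR_cube_le_of_le d α hνpos hνloc (le_max_left _ _) hdbl hb c hl hll' hl'
    _ ≤ 2 * D * D ^ |α / d| * (ε / (2 * D * D ^ |α / d|)) := by
        gcongr
        simpa using hR (n + 1) c hRc
    _ = ε := mul_div_cancel₀ ε hC.ne'

/-- For a doubling weight `ν`, if the oscillations `𝒪_ν^α(b;Q)` vanish
uniformly for small cubes and for large cubes, and for each fixed cube vanish along
translations to infinity, then they vanish uniformly over all cubes far from the
origin. -/
theorem stmt17 (d : ℕ) (hd : 0 < d) (α : ℝ)
    (ν : (Fin d → ℝ) → ℝ) (hνpos : ∀ x, 0 < ν x) (hνloc : LocallyIntegrable ν volume)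
    (hdbl : ∃ Cd > (0 : ℝ), ∀ (c : Fin d → ℝ) (l : ℝ), 0 < l →
      (∫ x in Cube d (fun i => c i - l / 2) (2 * l), ν x) ≤ Cd * ∫ x in Cube d c l, ν x)
    (b : (Fin d → ℝ) → ℂ) (hb : LocallyIntegrable b volume)
    (hsmall : ∀ ε > (0 : ℝ), ∃ r > (0 : ℝ), ∀ (c : Fin d → ℝ) (l : ℝ), 0 < l → l ≤ r →
      oscR d ν b α (Cube d c l) ≤ ε)
    (hbig : ∀ ε > (0 : ℝ), ∃ r > (0 : ℝ), ∀ (c : Fin d → ℝ) (l : ℝ), 0 < l → r ≤ l →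
      oscR d ν b α (Cube d c l) ≤ ε)
    (htrans : ∀ (c : Fin d → ℝ) (l : ℝ), 0 < l → ∀ ε > (0 : ℝ), ∃ R > (0 : ℝ),
      ∀ x : Fin d → ℝ, R ≤ ‖x‖ → oscR d ν b α (Cube d (c + x) l) ≤ ε) :
    ∀ ε > (0 : ℝ), ∃ r > (0 : ℝ), ∀ (c : Fin d → ℝ) (l : ℝ), 0 < l →
      r < Metric.infDist (0 : Fin d → ℝ) (Cube d c l) →
      oscR d ν b α (Cube d c l) ≤ ε :=
  stmt17_general d α ν hνpos hνloc hdbl b hb hsmall hbig htrans
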